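/- For every integer k ≥ 2 and any two distinct complex roots ζ₁, ζ₂ of A(x) = x^k - x^{k-1} - ... - 1, one has |ζ₁| = |ζ₂| if and only if ζ₁ is the complex conjugate of ζ₂. -/

import Mathlib

/-!
Multiplying `A` by `x - 1` shows that every root satisfies `ζ ^ k * (2 - ζ) = 1`, so
`‖2 - ζ‖ = ‖ζ‖⁻¹ ^ k` is determined by `‖ζ‖`. Two roots of equal modulus therefore lie on a
common circle about `0` and a common circle about `2`, and these circles meet only in a pair of
complex conjugate points.
-/

open Polynomial Finset

theorem pow_mul_two_sub_eq_one_of_isRoot {R : Type*} [CommRing R] {k : ℕ} {ζ : R}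
    (h : ((X : R[X]) ^ k - ∑ j ∈ range k, X ^ j).IsRoot ζ) : ζ ^ k * (2 - ζ) = 1 := by
  have hroot : ζ ^ k - ∑ j ∈ range k, ζ ^ j = 0 := by
    simpa [IsRoot, eval_finsetSum] using h
  linear_combination (1 - ζ) * hroot - geom_sum_mul ζ k

theorem Complex.eq_or_eq_conj_of_norm_eq_of_norm_sub_eq {c : ℝ} (hc : c ≠ 0) {z w : ℂ}
    (h₀ : ‖z‖ = ‖w‖) (h_c : ‖(c : ℂ) - z‖ = ‖(c : ℂ) - w‖) :
    z = w ∨ z = starRingEnd ℂ w := by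
  have h₀' : z.re * z.re + z.im * z.im = w.re * w.re + w.im * w.im := by
    simp only [← normSq_apply, normSq_eq_norm_sq, h₀]
  have h_c' : (c - z.re) * (c - z.re) + z.im * z.im = (c - w.re) * (c - w.re) + w.im * w.im := by
    have := congrArg (· ^ 2) h_c
    simpa [← normSq_eq_norm_sq, normSq_apply] using this
  have hre : z.re = w.re :=
    mul_left_cancel₀ (mul_ne_zero two_ne_zero hc) (by linear_combination h₀' - h_c')
  have him : z.im * z.im = w.im * w.im := by linear_combination h₀' - (z.re + w.re) * hre
  rcases mul_self_eq_mul_self_iff.mp him with him | him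
  · exact .inl (ext hre him)
  · exact .inr (ext (by simpa using hre) (by simpa using him))

theorem stmt_8 (k : ℕ) (ζ₁ ζ₂ : ℂ)
    (h₁ : ((X : Polynomial ℂ) ^ k - ∑ j ∈ range k, X ^ j).IsRoot ζ₁)
    (h₂ : ((X : Polynomial ℂ) ^ k - ∑ j ∈ range k, X ^ j).IsRoot ζ₂)
    (hne : ζ₁ ≠ ζ₂) :
    ‖ζ₁‖ = ‖ζ₂‖ ↔ ζ₁ = (starRingEnd ℂ) ζ₂ := by
  have norm_two_sub {ζ : ℂ} (h : ((X : ℂ[X]) ^ k - ∑ j ∈ range k, X ^ j).IsRoot ζ) :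
      ‖2 - ζ‖ = (‖ζ‖ ^ k)⁻¹ :=
    eq_inv_of_mul_eq_one_right <| by
      simpa using congrArg norm (pow_mul_two_sub_eq_one_of_isRoot h)
  refine ⟨fun h => ?_, fun h => by rw [h, Complex.norm_conj]⟩
  have h2 : ‖((2 : ℝ) : ℂ) - ζ₁‖ = ‖((2 : ℝ) : ℂ) - ζ₂‖ := by
    simp only [Complex.ofReal_ofNat, norm_two_sub h₁, norm_two_sub h₂, h]
  exact (Complex.eq_or_eq_conj_of_norm_eq_of_norm_sub_eq two_ne_zero h h2).resolve_left hne
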